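/- Let G be a left brace whose additive group (G,+) is the free abelian group with basis a finite subset X ⊆ G, and suppose λ_a(x) ∈ X for all a ∈ G and x ∈ X (so G acts on X via λ). Define G^(1) = G and G^(m+1) = the subgroup of (G,+) generated by {(λ_a − id)(b) : a ∈ G^(m), b ∈ G}. Let X_1, …, X_r be the orbits of X under the action of G^(m) via λ. Then G^(m+1) equals the subgroup of (G,+) generated by {y − x : x, y ∈ X_i, 1 ≤ i ≤ r}. -/

import Mathlib

/-- A left brace: an abelian group `(A, +)` together with a group operation `(a, b) ↦ a * b`
on the same set such that `a * (b + c) + a = a * b + a * c` for all `a`, `b`, `c`. -/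
class LeftBrace (A : Type*) extends AddCommGroup A, Group A where
  mul_add_add : ∀ a b c : A, a * (b + c) + a = a * b + a * c

/-- The lambda map of a left brace: `λ a b = a * b - a`. -/
def LeftBrace.lam {A : Type*} [LeftBrace A] (a b : A) : A := a * b - a

/-- Rump's series `G = G^(1) ⊇ G^(2) ⊇ ⋯`, where `G^(m+1)` is the additive subgroup
generated by `{(λ a - id) b : a ∈ G^(m), b ∈ G}`. Here `braceSeries G m = G^(m+1)`. -/
def LeftBrace.braceSeries (G : Type*) [LeftBrace G] : ℕ → AddSubgroup G
  | 0 => ⊤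
  | m + 1 => AddSubgroup.closure
      {c : G | ∃ a ∈ LeftBrace.braceSeries G m, ∃ b : G, c = LeftBrace.lam a b - b}

namespace LeftBrace

variable {G : Type*} [LeftBrace G]

lemma lam_add' (a u v : G) : lam a (u + v) = lam a u + lam a v := by
  have h : a * (u + v) = a * u + a * v - a := by
    rw [eq_sub_iff_add_eq]; exact LeftBrace.mul_add_add a u v
  simp only [lam, h]; abel

lemma lam_zero' (a : G) : lam a 0 = 0 := by
  have h := lam_add' a 0 0
  rw [add_zero] at h
  exact (left_eq_add.mp h)

/-- `λ a - id` as an additive homomorphism. -/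
def lamSub (a : G) : G →+ G where
  toFun x := lam a x - x
  map_zero' := by simp [lam_zero']
  map_add' u v := by show lam a (u + v) - (u + v) = _; rw [lam_add']; abel

end LeftBrace

open LeftBrace in
/-- Let `G` be a left brace whose additive group is free abelian with basis a finite
subset `X ⊆ G` which is invariant under all `λ a`. Then `G^(m+1)` is the additive
subgroup generated by the differences `y - x` of elements of `X` lying in the same
orbit under the action of `G^(m)` via `λ`. -/
theorem LeftBrace.braceSeries_eq_closure_orbit_differences {G : Type*} [LeftBrace G]
    (X : Set G) (hXfin : X.Finite) (b : Module.Basis X ℤ G) (hb : ∀ x : X, b x = (x : G))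
    (hX : ∀ a : G, ∀ x ∈ X, lam a x ∈ X) (m : ℕ) :
    braceSeries G (m + 1) = AddSubgroup.closure
      {c : G | ∃ x ∈ X, ∃ y ∈ X, (∃ a ∈ braceSeries G m, lam a x = y) ∧ c = y - x} := by
  have hXtop : AddSubgroup.closure X = (⊤ : AddSubgroup G) := by
    have hrange : Set.range ⇑b = X := by
      have : ⇑b = fun x : X => (x : G) := funext hb
      rw [this, Subtype.range_coe]
    have hspan : Submodule.span ℤ X = ⊤ := by rw [← hrange]; exact b.span_eq
    rw [← Submodule.span_int_eq_addSubgroupClosure, hspan]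
    rfl
  apply le_antisymm
  · show AddSubgroup.closure _ ≤ _
    rw [AddSubgroup.closure_le]
    rintro c ⟨a, ha, g, rfl⟩
    show lamSub a g ∈ _
    have hg : g ∈ AddSubgroup.closure X := by rw [hXtop]; trivial
    induction hg using AddSubgroup.closure_induction with
    | mem x hx =>
        simp only [lamSub, AddMonoidHom.coe_mk, ZeroHom.coe_mk]
        exact AddSubgroup.subset_closure ⟨x, hx, lam a x, hX a x hx, ⟨a, ha, rfl⟩, rfl⟩
    | zero => rw [map_zero]; exact AddSubgroup.zero_mem _
    | add u v hu hv pu pv => rw [map_add]; exact AddSubgroup.add_mem _ pu pv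
    | neg u hu pu => rw [map_neg]; exact AddSubgroup.neg_mem _ pu
  · rw [AddSubgroup.closure_le]
    rintro c ⟨x, hx, y, hy, ⟨a, ha, rfl⟩, rfl⟩
    exact AddSubgroup.subset_closure ⟨a, ha, x, rfl⟩
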